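/- arXiv:2504.11051 — 2 statements merged into one kernel-verified Lean document; each statement's English description precedes it below -/
import Mathlib

section
/- Let j ∈ ℕ and σ > 0, and let K be a family of functions K_k : ℝ² → ℂ (k ∈ ℤ) satisfying |y^γ K_k(y)| ≤ C · 2^{(j+3-|γ|)k} for all multi-indices γ with |γ| ∈ {0, j+4} and all y ≠ 0. Then the sum K(y) = Σ_{k ∈ ℤ} K_k(y) converges absolutely for y ≠ 0 and satisfies |K(y)| ≤ C' / |y|^{j+3}, with C' depending only on C and j. -/
open MeasureTheory Real

noncomputable abbrev E2 := EuclideanSpace ℝ (Fin 2)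

lemma zpow_negabs_eq (k : ℤ) : (2:ℝ) ^ (-|k|) = (1/2:ℝ) ^ k.natAbs := by
  rw [zpow_neg, show |k| = (k.natAbs : ℤ) from Int.abs_eq_natAbs k, zpow_natCast]
  simp [one_div, inv_pow]

lemma Ssummable : Summable (fun k : ℤ => (2:ℝ) ^ (-|k|)) := by
  have h : Summable (fun n : ℕ => (1/2:ℝ) ^ n) :=
    summable_geometric_of_lt_one (by norm_num) (by norm_num)
  simp_rw [zpow_negabs_eq]
  apply Summable.of_nat_of_neg_add_one
  · exact h.congr fun n => by simp
  · refine (h.mul_left (1/2)).congr fun n => ?_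
    have hn : ((-((n:ℤ)+1))).natAbs = n + 1 := by omega
    rw [hn, pow_succ]
    ring

noncomputable def Sval : ℝ := ∑' k : ℤ, (2:ℝ) ^ (-|k|)

lemma Spos : 0 < Sval :=
  Summable.tsum_pos Ssummable (fun k => by positivity) 0 (by norm_num)

lemma core (j : ℕ) (C t : ℝ) (hC : 0 < C) (ht : 0 < t) (f : ℤ → ℝ)
    (hf0 : ∀ k, 0 ≤ f k)
    (h1 : ∀ k : ℤ, f k ≤ C * (2:ℝ) ^ (((j:ℤ)+3)*k))
    (h2 : ∀ k : ℤ, t^(j+4) * f k ≤ C * (2:ℝ) ^ (-k)) :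
    Summable f ∧ ∑' k, f k ≤ (C * (2/t)^(j+3)) * Sval := by
  obtain ⟨n, hn1, hn2⟩ := exists_mem_Ico_zpow ht (by norm_num : (1:ℝ) < 2)
  set B := C * (2/t)^(j+3) with hB
  have hBpos : 0 < B := by positivity
  have key : ∀ k : ℤ, f k ≤ B * (2:ℝ) ^ (-|k + n|) := by
    intro k
    rcases le_or_gt (k + n) 0 with hk | hk
    · rw [abs_of_nonpos hk, neg_neg]
      refine (h1 k).trans ?_
      have e1 : (2:ℝ) ^ (((j:ℤ)+3)*k)
          = (2:ℝ) ^ (((j:ℤ)+3)*(k+n)) * ((2:ℝ) ^ (-n))^(j+3) := by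
        rw [← zpow_natCast ((2:ℝ)^(-n)) (j+3), ← zpow_mul,
          ← zpow_add₀ (by norm_num : (2:ℝ) ≠ 0)]
        congr 1; push_cast; ring
      have e2 : (2:ℝ) ^ (((j:ℤ)+3)*(k+n)) ≤ (2:ℝ) ^ (k+n) := by
        apply zpow_le_zpow_right₀ (by norm_num)
        nlinarith [hk]
      have e3 : ((2:ℝ) ^ (-n))^(j+3) ≤ (2/t)^(j+3) := by
        apply pow_le_pow_left₀ (by positivity)
        have h2n : (2:ℝ)^(-n) = 2 / (2:ℝ)^(n+1) := by
          rw [zpow_add₀ (by norm_num : (2:ℝ) ≠ 0)]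
          field_simp [zpow_neg]
          rw [← zpow_add₀ (by norm_num : (2:ℝ) ≠ 0), neg_add_cancel, zpow_zero]
        rw [h2n]
        exact div_le_div_of_nonneg_left (by norm_num) ht hn2.le
      calc C * (2:ℝ) ^ (((j:ℤ)+3)*k)
          = C * ((2:ℝ) ^ (((j:ℤ)+3)*(k+n)) * ((2:ℝ) ^ (-n))^(j+3)) := by rw [e1]
        _ ≤ C * ((2:ℝ) ^ (k+n) * (2/t)^(j+3)) := by
            apply mul_le_mul_of_nonneg_left _ hC.le
            exact mul_le_mul e2 e3 (by positivity) (by positivity)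
        _ = B * (2:ℝ)^(k+n) := by rw [hB]; ring
    · rw [abs_of_nonneg hk.le]
      have htp : (0:ℝ) < t^(j+3) := by positivity
      have hfk : f k ≤ C * (2:ℝ)^(-k) / t^(j+4) := by
        rw [le_div_iff₀ (by positivity)]
        calc f k * t^(j+4) = t^(j+4) * f k := by ring
          _ ≤ C * (2:ℝ)^(-k) := h2 k
      refine hfk.trans ?_
      have esplit : (2:ℝ)^(-k) = (2:ℝ)^(-(k+n)) * (2:ℝ)^n := by
        rw [← zpow_add₀ (by norm_num : (2:ℝ) ≠ 0)]
        congr 1; ring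
      set u := (2:ℝ)^(-(k+n)) with hu
      have hupos : 0 < u := by positivity
      have hQ : (1:ℝ) ≤ 2^(j+3) := one_le_pow₀ (by norm_num : (1:ℝ) ≤ 2)
      rw [esplit]
      have lhs_eq : C * (u * (2:ℝ)^n) / t^(j+4) = C * u * (2:ℝ)^n / (t^(j+3) * t) := by
        rw [pow_succ]; ring_nf
      have rhs_eq : B * u = C * (2:ℝ)^(j+3) * u * t / (t^(j+3) * t) := by
        rw [hB, div_pow]
        field_simp
      rw [lhs_eq, rhs_eq]
      apply div_le_div_of_nonneg_right _ (by positivity)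
      calc C * u * (2:ℝ)^n ≤ C * u * t := by
            apply mul_le_mul_of_nonneg_left hn1 (by positivity)
        _ = C * 1 * u * t := by ring
        _ ≤ C * (2:ℝ)^(j+3) * u * t := by
            apply mul_le_mul_of_nonneg_right _ ht.le
            apply mul_le_mul_of_nonneg_right _ hupos.le
            nlinarith [hQ]
  have hcomp : Summable (fun k : ℤ => B * (2:ℝ) ^ (-|k + n|)) := by
    have := (Equiv.addRight n).summable_iff (f := fun k : ℤ => (2:ℝ)^(-|k|))
    exact ((this.mpr Ssummable).mul_left B)
  have hsum : Summable f := Summable.of_nonneg_of_le hf0 key hcomp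
  refine ⟨hsum, ?_⟩
  calc ∑' k, f k ≤ ∑' k : ℤ, B * (2:ℝ) ^ (-|k + n|) := Summable.tsum_le_tsum key hsum hcomp
    _ = B * ∑' k : ℤ, (2:ℝ) ^ (-|k + n|) := tsum_mul_left
    _ = B * Sval := by
        rw [Sval]
        congr 1
        exact (Equiv.addRight n).tsum_eq (fun k : ℤ => (2:ℝ)^(-|k|))

/-- Dyadic summation step of the Mikhlin–Hörmander argument: if the dyadic pieces
`K_k` satisfy `|y^γ K_k(y)| ≤ C 2^{(j+3-|γ|)k}` for all multi-indices `γ` with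
`|γ| ∈ {0, j+4}`, then `Σ_k K_k(y)` converges absolutely for `y ≠ 0` and is bounded
by `C' / |y|^{j+3}` with `C'` depending only on `C` and `j`. -/
theorem dyadic_summation_bound (j : ℕ) (C : ℝ) (hC : 0 < C) :
    ∃ C' : ℝ, 0 < C' ∧ ∀ K : ℤ → E2 → ℂ,
      (∀ γ : Fin 2 → ℕ, ((∑ i, γ i) = 0 ∨ (∑ i, γ i) = j + 4) →
        ∀ k : ℤ, ∀ y : E2, y ≠ 0 →
          |∏ i, (y i) ^ (γ i)| * ‖K k y‖ ≤ C * (2 : ℝ) ^ ((((j : ℤ) + 3) - (∑ i, γ i)) * k)) →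
      ∀ y : E2, y ≠ 0 →
        Summable (fun k : ℤ => ‖K k y‖) ∧
        ‖∑' k : ℤ, K k y‖ ≤ C' / ‖y‖ ^ (j + 3) := by
  refine ⟨C * 4^(j+3) * Sval, mul_pos (by positivity) Spos, ?_⟩
  intro K hK y hy
  -- pick a large coordinate
  obtain ⟨i, hi⟩ : ∃ i : Fin 2, ‖y‖ ≤ 2 * |y i| := by
    have hnorm : ‖y‖ = Real.sqrt (|y 0|^2 + |y 1|^2) := by
      rw [EuclideanSpace.norm_eq, Fin.sum_univ_two]
      simp [Real.norm_eq_abs, sq_abs]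
    rcases le_total (|y 0|) (|y 1|) with h | h
    · refine ⟨1, ?_⟩
      rw [hnorm]
      calc Real.sqrt (|y 0|^2 + |y 1|^2) ≤ Real.sqrt ((2 * |y 1|)^2) := by
            apply Real.sqrt_le_sqrt; nlinarith [abs_nonneg (y 0), abs_nonneg (y 1)]
        _ = 2 * |y 1| := Real.sqrt_sq (by positivity)
    · refine ⟨0, ?_⟩
      rw [hnorm]
      calc Real.sqrt (|y 0|^2 + |y 1|^2) ≤ Real.sqrt ((2 * |y 0|)^2) := by
            apply Real.sqrt_le_sqrt; nlinarith [abs_nonneg (y 0), abs_nonneg (y 1)]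
        _ = 2 * |y 0| := Real.sqrt_sq (by positivity)
  set t := |y i| with htdef
  have hynorm : 0 < ‖y‖ := norm_pos_iff.mpr hy
  have ht : 0 < t := by
    by_contra h
    push_neg at h
    have : t = 0 := le_antisymm h (abs_nonneg _)
    rw [this] at hi
    linarith
  have h1 : ∀ k : ℤ, ‖K k y‖ ≤ C * (2:ℝ) ^ (((j:ℤ)+3)*k) := by
    intro k
    have := hK (fun _ => 0) (Or.inl (by simp)) k y hy
    simpa using this
  have h2 : ∀ k : ℤ, t^(j+4) * ‖K k y‖ ≤ C * (2:ℝ) ^ (-k) := by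
    intro k
    set γ0 : Fin 2 → ℕ := Pi.single i (j+4) with hγ0
    have hsum : (∑ i', γ0 i') = j + 4 := by
      rw [hγ0]
      rw [Finset.sum_pi_single']
      simp
    have := hK γ0 (Or.inr hsum) k y hy
    rw [hsum] at this
    have hprod : (∏ i', (y i') ^ (γ0 i')) = (y i)^(j+4) := by
      rw [hγ0, Finset.prod_eq_single i
        (fun b _ hb => by rw [Pi.single_eq_of_ne hb, pow_zero])
        (fun h => absurd (Finset.mem_univ i) h), Pi.single_eq_same]
    rw [hprod, abs_pow] at this
    have hexp : (((j:ℤ) + 3) - ((j:ℕ) + 4 : ℕ)) * k = -k := by push_cast; ring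
    rw [hexp] at this
    exact this
  obtain ⟨hsum, hbound⟩ := core j C t hC ht (fun k => ‖K k y‖) (fun k => norm_nonneg _) h1 h2
  refine ⟨hsum, ?_⟩
  calc ‖∑' k : ℤ, K k y‖ ≤ ∑' k : ℤ, ‖K k y‖ := norm_tsum_le_tsum_norm hsum
    _ ≤ (C * (2/t)^(j+3)) * Sval := hbound
    _ ≤ (C * (4/‖y‖)^(j+3)) * Sval := by
        apply mul_le_mul_of_nonneg_right _ Spos.le
        apply mul_le_mul_of_nonneg_left _ hC.le
        apply pow_le_pow_left₀ (by positivity)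
        rw [div_le_div_iff₀ ht hynorm]
        linarith
    _ = C * 4^(j+3) * Sval / ‖y‖^(j+3) := by
        rw [div_pow]
        field_simp
end

section
/- Let H, L > 0 with L ≥ H, let σ > 0, z ∈ [0, 1], and suppose |B(ỹ, z, z̃)| ≤ σ z z̃/(z + z̃ + |ỹ|)^4 for all ỹ ∈ ℝ², z̃ ∈ (0, H). Then for any measurable θ̃ with |θ̃| ≤ 1, ∫_0^H ∫_{ℝ²∖[-L/2,L/2]²} |B(ỹ, z, z̃)| dỹ dz̃ ≤ C σ z H/L, with a universal constant C. -/
open MeasureTheory Real Set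

-- radial integral: ∫_{Ioi 0} (c+y)^{-2} = 1/c, and integrability
lemma aux_int_sq {c : ℝ} (hc : 0 < c) :
    IntegrableOn (fun y : ℝ => ((c + y) ^ 2)⁻¹) (Ioi 0) ∧
    ∫ y in Ioi (0:ℝ), ((c + y) ^ 2)⁻¹ = 1 / c := by
  have hderiv : ∀ x ∈ Ici (0:ℝ), HasDerivAt (fun y => -(c + y)⁻¹) (((c + x) ^ 2)⁻¹) x := by
    intro x hx
    have hcx : c + x ≠ 0 := by simp only [mem_Ici] at hx; nlinarith
    have h1 : HasDerivAt (fun y : ℝ => c + y) 1 x := (hasDerivAt_id x).const_add c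
    have := (h1.inv hcx).neg
    convert this using 1
    · rfl
    · rfl
    · rfl
    · ring
  have hpos : ∀ x ∈ Ioi (0:ℝ), 0 ≤ ((c + x) ^ 2)⁻¹ := by
    intro x hx; simp only [mem_Ioi] at hx; positivity
  have htend : Filter.Tendsto (fun y : ℝ => -(c + y)⁻¹) Filter.atTop (nhds 0) := by
    have : Filter.Tendsto (fun y : ℝ => c + y) Filter.atTop Filter.atTop :=
      Filter.tendsto_atTop_add_const_left _ c Filter.tendsto_id
    simpa using (this.inv_tendsto_atTop).neg
  refine ⟨integrableOn_Ioi_deriv_of_nonneg' hderiv hpos htend, ?_⟩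
  have := integral_Ioi_of_hasDerivAt_of_nonneg' hderiv hpos htend
  rw [this]; simp [one_div]

lemma aux_radial {c : ℝ} (hc : 0 < c) :
    ∫ y in Ioi (0:ℝ), y ^ 1 • ((c + y) ^ 3)⁻¹ ≤ 1 / c := by
  rw [← (aux_int_sq hc).2]
  apply integral_mono_of_nonneg
  · filter_upwards [ae_restrict_mem measurableSet_Ioi] with y hy
    simp only [mem_Ioi] at hy; positivity
  · exact (aux_int_sq hc).1
  · filter_upwards [ae_restrict_mem measurableSet_Ioi] with y hy
    simp only [mem_Ioi] at hy
    have h1 : (0:ℝ) < c + y := by linarith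
    rw [pow_one, smul_eq_mul]
    calc y * ((c + y) ^ 3)⁻¹ ≤ (c + y) * ((c + y) ^ 3)⁻¹ := by gcongr; linarith
      _ = ((c + y) ^ 2)⁻¹ := by field_simp

lemma aux_integrable {c : ℝ} (hc : 0 < c) :
    Integrable (fun y : E2 => ((c + ‖y‖) ^ 3)⁻¹) := by
  have h3 : ((Module.finrank ℝ E2 : ℝ)) < 3 := by
    simp [finrank_euclideanSpace_fin]; norm_num
  have hint := integrable_one_add_norm (E := E2) (μ := volume) (r := 3) h3
  set m := min c 1 with hm
  have hm0 : 0 < m := lt_min hc one_pos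
  refine (hint.const_mul (m ^ 3)⁻¹).mono' ?_ ?_
  · apply Continuous.aestronglyMeasurable
    have : ∀ y : E2, c + ‖y‖ ≠ 0 := fun y => by positivity
    exact (continuous_const.add continuous_norm).pow 3 |>.inv₀ fun y => pow_ne_zero 3 (this y)
  · filter_upwards with y
    have hny : (0:ℝ) ≤ ‖y‖ := norm_nonneg y
    have key : m * (1 + ‖y‖) ≤ c + ‖y‖ := by
      rcases le_total c 1 with h | h
      · have : m = c := min_eq_left h
        rw [this]; nlinarith
      · have : m = 1 := min_eq_right h
        rw [this]; nlinarith
    have h1 : (0:ℝ) < 1 + ‖y‖ := by linarith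
    rw [norm_inv, norm_pow]
    have : (1 + ‖y‖) ^ (-(3:ℝ)) = ((1 + ‖y‖) ^ (3:ℕ))⁻¹ := by
      rw [Real.rpow_neg h1.le]; congr 1; exact_mod_cast Real.rpow_natCast _ 3
    rw [this]
    have hcy : (0:ℝ) < c + ‖y‖ := by positivity
    have : ‖c + ‖y‖‖ = c + ‖y‖ := abs_of_pos hcy
    rw [this]
    rw [← mul_inv]
    apply inv_anti₀ (by positivity)
    calc m ^ 3 * (1 + ‖y‖) ^ 3 = (m * (1 + ‖y‖)) ^ 3 := by ring
    _ ≤ (c + ‖y‖) ^ 3 := by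
        apply pow_le_pow_left₀ (by positivity) key

lemma aux_full {c : ℝ} (hc : 0 < c) :
    ∫ y : E2, ((c + ‖y‖) ^ 3)⁻¹ ≤
      2 * (volume (Metric.ball (0:E2) 1)).toReal * (1 / c) := by
  have h := integral_fun_norm_addHaar (volume : Measure E2) (fun r => ((c + r) ^ 3)⁻¹)
  have hdim : Module.finrank ℝ E2 = 2 := finrank_euclideanSpace_fin
  rw [hdim] at h
  rw [h]
  rw [nsmul_eq_mul, smul_eq_mul]
  push_cast
  rw [mul_assoc]
  gcongr
  · exact setIntegral_nonneg measurableSet_Ioi (fun y hy => by simp only [mem_Ioi] at hy; positivity)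
  · exact le_rfl
  · exact aux_radial hc

lemma aux_coord (y : E2) (i : Fin 2) : |y i| ≤ ‖y‖ := by
  rw [EuclideanSpace.norm_eq]
  have h1 : |y i| = Real.sqrt (‖y i‖ ^ 2) := by
    rw [Real.sqrt_sq_eq_abs]; simp
  rw [h1]
  apply Real.sqrt_le_sqrt
  exact Finset.single_le_sum (f := fun j => ‖y j‖ ^ 2) (fun j _ => by positivity) (Finset.mem_univ i)

/-- Horizontal truncation estimate: if `|B(ỹ, z, z̃)| ≤ σ z z̃/(z+z̃+|ỹ|)^4`, then the
integral of `|B|` over `z̃ ∈ (0,H)` and `ỹ` outside the square `[-L/2, L/2]²` is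
controlled by `C σ z H/L`, provided `L ≥ H`. -/
theorem horizontal_truncation_estimate :
    ∃ C : ℝ, 0 < C ∧ ∀ (H L σ z : ℝ) (B : E2 → ℝ → ℝ), 0 < H → H ≤ L → 0 < σ →
      z ∈ Set.Icc (0 : ℝ) 1 →
      (∀ ytilde : E2, ∀ ztilde ∈ Set.Ioo (0 : ℝ) H,
        |B ytilde ztilde| ≤ σ * z * ztilde / (z + ztilde + ‖ytilde‖) ^ 4) →
      (∫ ztilde in Set.Ioo (0 : ℝ) H,
          ∫ ytilde in {ytilde : E2 | ∀ i, |ytilde i| ≤ L / 2}ᶜ, |B ytilde ztilde|)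
        ≤ C * σ * z * H / L := by
  set V : ℝ := (volume (Metric.ball (0:E2) 1)).toReal with hV
  have hV0 : 0 < V := ENNReal.toReal_pos
    (ne_of_gt (Metric.measure_ball_pos volume (0:E2) one_pos)) measure_ball_lt_top.ne
  refine ⟨4 * V, by positivity, ?_⟩
  intro H L σ z B hH hHL hσ hz hB
  have hL : (0:ℝ) < L := lt_of_lt_of_le hH hHL
  have hz0 : (0:ℝ) ≤ z := hz.1
  set S : Set E2 := {y : E2 | ∀ i, |y i| ≤ L / 2}ᶜ with hS
  have hSmeas : MeasurableSet S := by
    apply MeasurableSet.compl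
    have : IsClosed {y : E2 | ∀ i, |y i| ≤ L / 2} := by
      have : {y : E2 | ∀ i, |y i| ≤ L / 2} = ⋂ i, {y : E2 | |y i| ≤ L / 2} := by
        ext y; simp
      rw [this]
      refine isClosed_iInter fun i => ?_
      exact isClosed_le (by fun_prop) continuous_const
    exact this.measurableSet
  -- inner bound
  have hinner : ∀ zt ∈ Ioo (0:ℝ) H,
      (∫ y in S, |B y zt|) ≤ 4 * V * σ * z / L := by
    intro zt hzt
    have hzt0 : 0 < zt := hzt.1
    set g : E2 → ℝ := fun y => (2 * σ * z * zt / L) * ((zt + ‖y‖) ^ 3)⁻¹ with hg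
    have hgint : Integrable g := (aux_integrable hzt0).const_mul _
    have hkey : ∀ y ∈ S, |B y zt| ≤ g y := by
      intro y hy
      obtain ⟨i, hi⟩ := by simp only [hS, mem_compl_iff, mem_setOf_eq, not_forall, not_le] at hy; exact hy
      have h1 : L / 2 ≤ ‖y‖ := le_trans (le_of_lt hi) (aux_coord y i)
      have h2 : L / 2 ≤ zt + ‖y‖ := by linarith
      have ha : (0:ℝ) < zt + ‖y‖ := by
        have := norm_nonneg y; linarith
      refine le_trans (hB y zt hzt) ?_
      have hchain : (L / 2) * (zt + ‖y‖) ^ 3 ≤ (z + zt + ‖y‖) ^ 4 := by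
        calc (L / 2) * (zt + ‖y‖) ^ 3 ≤ (zt + ‖y‖) * (zt + ‖y‖) ^ 3 := by gcongr
          _ = (zt + ‖y‖) ^ 4 := by ring
          _ ≤ (z + zt + ‖y‖) ^ 4 := by gcongr; linarith
      calc σ * z * zt / (z + zt + ‖y‖) ^ 4 ≤ σ * z * zt / ((L / 2) * (zt + ‖y‖) ^ 3) := by
            apply div_le_div_of_nonneg_left _ (by positivity) hchain
            positivity
        _ = g y := by rw [hg]; field_simp
    calc (∫ y in S, |B y zt|) ≤ ∫ y in S, g y := by
          apply integral_mono_of_nonneg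
          · exact Filter.Eventually.of_forall fun y => abs_nonneg _
          · exact hgint.integrableOn
          · filter_upwards [ae_restrict_mem hSmeas] with y hy using hkey y hy
      _ ≤ ∫ y, g y := by
          apply setIntegral_le_integral hgint
          exact Filter.Eventually.of_forall fun y => by positivity
      _ = (2 * σ * z * zt / L) * ∫ y : E2, ((zt + ‖y‖) ^ 3)⁻¹ := integral_const_mul _ _
      _ ≤ (2 * σ * z * zt / L) * (2 * V * (1 / zt)) := by
          gcongr
          exact aux_full hzt0
      _ = 4 * V * σ * z / L * (zt / zt) := by ring
      _ = 4 * V * σ * z / L := by rw [div_self (ne_of_gt hzt0), mul_one]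
  -- outer bound
  calc (∫ zt in Ioo (0:ℝ) H, ∫ y in S, |B y zt|)
      ≤ ∫ _zt in Ioo (0:ℝ) H, (4 * V * σ * z / L) := by
        apply integral_mono_of_nonneg
        · exact Filter.Eventually.of_forall fun zt =>
            integral_nonneg fun y => abs_nonneg _
        · exact integrableOn_const measure_Ioo_lt_top.ne
        · filter_upwards [ae_restrict_mem measurableSet_Ioo] with zt hzt
          exact hinner zt hzt
    _ = (volume (Ioo (0:ℝ) H)).toReal * (4 * V * σ * z / L) := by
        rw [setIntegral_const, smul_eq_mul]; rfl
    _ = 4 * V * σ * z * H / L := by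
        rw [Real.volume_Ioo, ENNReal.toReal_ofReal (by linarith)]
        ring
end
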